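/- Let P = Q diag(ω) Qᵀ with Q an orthogonal n×n real matrix and ω ∈ ℝⁿ with all ωᵢ > 0; let ω_min = minᵢ ωᵢ and ω_max = maxᵢ ωᵢ, q ∈ ℝⁿ, s = Qᵀ𝟏, q̃ = Qᵀq, and for 0 ≤ α < ω_min define g(α) = −(q + (α/2)𝟏)ᵀ (P − αI)⁻¹ (q + (α/2)𝟏). If Σᵢ ((q̃ᵢ + (1/2)ωᵢ sᵢ)/(ωᵢ − α))² ≤ n/4 for all α ∈ [0, ω_min) (i.e., g'(α) ≥ 0 on this interval), then g(α) − g(0) ≥ n α² / (4 ω_max) for every α ∈ [0, ω_min); consequently sup_{0 ≤ α < ω_min} (g(α) − g(0)) ≥ n ω_min² / (4 ω_max). -/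

import Mathlib

/-!
In the eigenbasis of `P`, `g α = -∑ᵢ (q̃ᵢ + α sᵢ / 2)² / (ωᵢ - α)`, and a termwise identity gives
`g α - g 0 = α (n/4 - ∑ᵢ (1 - α/ωᵢ) uᵢ²)` with `uᵢ = (q̃ᵢ + ωᵢ sᵢ / 2) / (ωᵢ - α)`, using
`∑ᵢ sᵢ² = ‖𝟏‖² = n`. Since `1 - α/ωᵢ ≤ 1 - α/ω_max` and `∑ᵢ uᵢ² ≤ n/4` (the hypothesis `g' ≥ 0`),
this is at least `n α² / (4 ω_max)`. The same identity bounds `g α - g 0` above by `α n / 4`, so the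
supremum is finite, and letting `α ↑ ω_min` gives the bound on it.
-/

open Matrix

section Spectral

variable {ι : Type*} [Fintype ι] [DecidableEq ι] {Q : Matrix ι ι ℝ}

lemma inv_orthogonal_conj_diagonal (hQ : Qᵀ * Q = 1) {d : ι → ℝ} (hd : ∀ i, d i ≠ 0) :
    (Q * diagonal d * Qᵀ)⁻¹ = Q * diagonal (fun i => (d i)⁻¹) * Qᵀ := by
  have hdiag : (diagonal d)⁻¹ = diagonal (fun i => (d i)⁻¹) := by
    refine inv_eq_right_inv ?_
    rw [diagonal_mul_diagonal]
    simp [mul_inv_cancel₀ (hd _)]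
  rw [Matrix.mul_inv_rev, Matrix.mul_inv_rev, hdiag, inv_eq_left_inv hQ, inv_eq_right_inv hQ,
    Matrix.mul_assoc]

lemma orthogonal_conj_diagonal_sub_smul_one (hQ : Qᵀ * Q = 1) (d : ι → ℝ) (α : ℝ) :
    Q * diagonal d * Qᵀ - α • 1 = Q * diagonal (fun i => d i - α) * Qᵀ := by
  have hQ' : Q * Qᵀ = 1 := mul_eq_one_comm.mp hQ
  have hdiag : diagonal d - α • 1 = diagonal fun i => d i - α := by
    rw [smul_one_eq_diagonal, diagonal_sub]
  rw [← hdiag, Matrix.mul_sub, Matrix.sub_mul, Matrix.mul_smul, Matrix.smul_mul, Matrix.mul_one,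
    hQ']

lemma dotProduct_orthogonal_conj_diagonal_mulVec (d v : ι → ℝ) :
    v ⬝ᵥ (Q * diagonal d * Qᵀ) *ᵥ v = ∑ i, d i * (Qᵀ *ᵥ v) i ^ 2 := by
  rw [← mulVec_mulVec, ← mulVec_mulVec, dotProduct_mulVec, ← mulVec_transpose]
  simp only [dotProduct, mulVec_diagonal]
  exact Finset.sum_congr rfl fun i _ => by ring

lemma dotProduct_inv_orthogonal_conj_diagonal_sub_smul_mulVec (hQ : Qᵀ * Q = 1) (d v : ι → ℝ)
    {α : ℝ} (hα : ∀ i, d i ≠ α) :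
    v ⬝ᵥ (Q * diagonal d * Qᵀ - α • 1)⁻¹ *ᵥ v = ∑ i, (Qᵀ *ᵥ v) i ^ 2 / (d i - α) := by
  rw [orthogonal_conj_diagonal_sub_smul_one hQ,
    inv_orthogonal_conj_diagonal hQ fun i => sub_ne_zero.mpr (hα i),
    dotProduct_orthogonal_conj_diagonal_mulVec]
  exact Finset.sum_congr rfl fun i _ => inv_mul_eq_div _ _

lemma sum_sq_transpose_mulVec_of_orthogonal (hQ : Qᵀ * Q = 1) (v : ι → ℝ) :
    ∑ i, (Qᵀ *ᵥ v) i ^ 2 = ∑ i, v i ^ 2 := by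
  have hQ' : Q * Qᵀ = 1 := mul_eq_one_comm.mp hQ
  simpa [dotProduct, sq, ← mulVec_transpose, dotProduct_mulVec, mulVec_mulVec, hQ'] using
    dotProduct_mulVec (Qᵀ *ᵥ v) Qᵀ v

end Spectral

lemma sq_div_sub_sq_div_sub_eq {a b w α : ℝ} (hw : w ≠ 0) (hwα : w ≠ α) :
    a ^ 2 / w - (a + α / 2 * b) ^ 2 / (w - α)
      = α * (b ^ 2 / 4 - (a + 1 / 2 * w * b) ^ 2 / (w * (w - α))) := by
  have : w - α ≠ 0 := sub_ne_zero.mpr hwα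
  field_simp
  ring

lemma sq_div_mul_sub_le {c w α M : ℝ} (hα : 0 ≤ α) (hαw : α < w) (hwM : w ≤ M) :
    c ^ 2 / (w * (w - α)) ≤ (1 - α / M) * (c / (w - α)) ^ 2 := by
  have hw : 0 < w := hα.trans_lt hαw
  have hwα : 0 < w - α := sub_pos.mpr hαw
  have hfactor : c ^ 2 / (w * (w - α)) = (1 - α / w) * (c / (w - α)) ^ 2 := by
    field_simp
  rw [hfactor]
  gcongr

section SpectralDual

variable {ι : Type*} [Fintype ι] (ω qt s : ι → ℝ)

noncomputable def spectralDual (α : ℝ) : ℝ := -∑ i, (qt i + α / 2 * s i) ^ 2 / (ω i - α)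

lemma spectralDual_sub_spectralDual_zero {α : ℝ} (hω : ∀ i, ω i ≠ 0) (hα : ∀ i, ω i ≠ α) :
    spectralDual ω qt s α - spectralDual ω qt s 0
      = α * ((∑ i, s i ^ 2) / 4 - ∑ i, (qt i + 1 / 2 * ω i * s i) ^ 2 / (ω i * (ω i - α))) := by
  simp only [spectralDual, zero_div, zero_mul, add_zero, sub_zero]
  rw [neg_sub_neg, ← Finset.sum_sub_distrib, Finset.sum_div, ← Finset.sum_sub_distrib,
    Finset.mul_sum]
  exact Finset.sum_congr rfl fun i _ => sq_div_sub_sq_div_sub_eq (hω i) (hα i)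

variable {ω qt s}

lemma spectralDual_sub_spectralDual_zero_le {α : ℝ} (hα : 0 ≤ α) (hαω : ∀ i, α < ω i) :
    spectralDual ω qt s α - spectralDual ω qt s 0 ≤ α * ((∑ i, s i ^ 2) / 4) := by
  rw [spectralDual_sub_spectralDual_zero ω qt s (fun i => (hα.trans_lt (hαω i)).ne')
    (fun i => (hαω i).ne')]
  have : 0 ≤ ∑ i, (qt i + 1 / 2 * ω i * s i) ^ 2 / (ω i * (ω i - α)) :=
    Finset.sum_nonneg fun i _ =>
      div_nonneg (sq_nonneg _) (mul_pos (hα.trans_lt (hαω i)) (sub_pos.mpr (hαω i))).le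
  gcongr
  linarith

lemma le_spectralDual_sub_spectralDual_zero [Nonempty ι] {α M : ℝ} (hα : 0 ≤ α)
    (hαω : ∀ i, α < ω i) (hωM : ∀ i, ω i ≤ M)
    (hder : ∑ i, ((qt i + 1 / 2 * ω i * s i) / (ω i - α)) ^ 2 ≤ (∑ i, s i ^ 2) / 4) :
    (∑ i, s i ^ 2) * α ^ 2 / (4 * M) ≤ spectralDual ω qt s α - spectralDual ω qt s 0 := by
  rw [spectralDual_sub_spectralDual_zero ω qt s (fun i => (hα.trans_lt (hαω i)).ne')
    (fun i => (hαω i).ne')]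
  obtain ⟨i₀⟩ := ‹Nonempty ι›
  have hM : 0 < M := hα.trans_lt ((hαω i₀).trans_le (hωM i₀))
  have hαM : 0 ≤ 1 - α / M := sub_nonneg.mpr ((div_le_one hM).mpr ((hαω i₀).le.trans (hωM i₀)))
  have hT : ∑ i, (qt i + 1 / 2 * ω i * s i) ^ 2 / (ω i * (ω i - α))
      ≤ (1 - α / M) * ((∑ i, s i ^ 2) / 4) :=
    calc ∑ i, (qt i + 1 / 2 * ω i * s i) ^ 2 / (ω i * (ω i - α))
        ≤ ∑ i, (1 - α / M) * ((qt i + 1 / 2 * ω i * s i) / (ω i - α)) ^ 2 :=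
          Finset.sum_le_sum fun i _ => sq_div_mul_sub_le hα (hαω i) (hωM i)
      _ = (1 - α / M) * ∑ i, ((qt i + 1 / 2 * ω i * s i) / (ω i - α)) ^ 2 :=
          (Finset.mul_sum _ _ _).symm
      _ ≤ (1 - α / M) * ((∑ i, s i ^ 2) / 4) := mul_le_mul_of_nonneg_left hder hαM
  calc (∑ i, s i ^ 2) * α ^ 2 / (4 * M) = α * (α / M * ((∑ i, s i ^ 2) / 4)) := by
        field_simp
    _ ≤ _ := by gcongr; linarith

end SpectralDual

/-- If `g'(α) ≥ 0` on `[0, ω_min)` (i.e. `∑ᵢ ((q̃ᵢ + ωᵢsᵢ/2)/(ωᵢ - α))² ≤ n/4` there),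
then `g(α) - g(0) ≥ n α² / (4 ω_max)` on `[0, ω_min)`, and consequently
`sup_{0 ≤ α < ω_min} (g(α) - g(0)) ≥ n ω_min² / (4 ω_max)`. -/
theorem stmt_16 (n : ℕ) (Q : Matrix (Fin n) (Fin n) ℝ) (hQ : Qᵀ * Q = 1)
    (ω : Fin n → ℝ) (hω : ∀ i, 0 < ω i)
    (P : Matrix (Fin n) (Fin n) ℝ) (hP : P = Q * Matrix.diagonal ω * Qᵀ)
    (ωmin ωmax : ℝ) (hωmin : IsLeast (Set.range ω) ωmin)
    (hωmax : IsGreatest (Set.range ω) ωmax)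
    (q s qt : Fin n → ℝ)
    (hs : s = Qᵀ *ᵥ (fun _ => 1)) (hqt : qt = Qᵀ *ᵥ q)
    (g : ℝ → ℝ)
    (hg : ∀ α, g α = -((q + (α / 2) • (fun _ => 1 : Fin n → ℝ)) ⬝ᵥ
      ((P - α • (1 : Matrix (Fin n) (Fin n) ℝ))⁻¹ *ᵥ
        (q + (α / 2) • (fun _ => 1 : Fin n → ℝ)))))
    (hder : ∀ α : ℝ, 0 ≤ α → α < ωmin →
      ∑ i, ((qt i + (1 / 2) * ω i * s i) / (ω i - α)) ^ 2 ≤ (n : ℝ) / 4) :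
    (∀ α : ℝ, 0 ≤ α → α < ωmin →
        (n : ℝ) * α ^ 2 / (4 * ωmax) ≤ g α - g 0) ∧
      (n : ℝ) * ωmin ^ 2 / (4 * ωmax) ≤
        sSup {r : ℝ | ∃ α : ℝ, 0 ≤ α ∧ α < ωmin ∧ r = g α - g 0} := by
  obtain ⟨⟨i₀, hi₀⟩, hωmin_le⟩ := hωmin
  have : Nonempty (Fin n) := ⟨i₀⟩
  have hωmin_pos : 0 < ωmin := hi₀ ▸ hω i₀
  have hlt : ∀ α < ωmin, ∀ i, α < ω i := fun α hα i => hα.trans_le (hωmin_le ⟨i, rfl⟩)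
  have hsum_sq : ∑ i, s i ^ 2 = n := by
    simp [hs, sum_sq_transpose_mulVec_of_orthogonal hQ]
  have hg_eq : ∀ α < ωmin, g α = spectralDual ω qt s α := by
    intro α hα
    rw [hg, hP, dotProduct_inv_orthogonal_conj_diagonal_sub_smul_mulVec hQ _ _
      fun i => (hlt α hα i).ne']
    simp [spectralDual, mulVec_add, mulVec_smul, hqt, hs]
  have hlower : ∀ α, 0 ≤ α → α < ωmin → (n : ℝ) * α ^ 2 / (4 * ωmax) ≤ g α - g 0 := by
    intro α hα₀ hα
    rw [hg_eq α hα, hg_eq 0 hωmin_pos, ← hsum_sq]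
    exact le_spectralDual_sub_spectralDual_zero hα₀ (hlt α hα) (fun i => hωmax.2 ⟨i, rfl⟩)
      (hsum_sq ▸ hder α hα₀ hα)
  have hbdd : BddAbove {r : ℝ | ∃ α : ℝ, 0 ≤ α ∧ α < ωmin ∧ r = g α - g 0} := by
    refine ⟨ωmin * (n / 4), ?_⟩
    rintro r ⟨α, hα₀, hα, rfl⟩
    rw [hg_eq α hα, hg_eq 0 hωmin_pos, ← hsum_sq]
    exact (spectralDual_sub_spectralDual_zero_le hα₀ (hlt α hα)).trans (by gcongr)
  refine ⟨hlower, ?_⟩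
  refine ContinuousWithinAt.closure_le (f := fun α => (n : ℝ) * α ^ 2 / (4 * ωmax))
    (s := Set.Ioo 0 ωmin) ?_ (by fun_prop)
    continuousWithinAt_const fun α ⟨hα₀, hα⟩ => ?_
  · rw [closure_Ioo hωmin_pos.ne]
    exact Set.right_mem_Icc.mpr hωmin_pos.le
  · exact (hlower α hα₀.le hα).trans (le_csSup hbdd ⟨α, hα₀.le, hα, rfl⟩)
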